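/- Let x = K̃ε η > 1 and N = ⌊x^{1/3}⌋. Then x^N / (N!)³ ≤ C x^{−1/2} e^{3 x^{1/3}} and x^N / (N!)³ ≥ c x^{−1/2} e^{3 x^{1/3}} for universal constants C, c > 0, provided x is sufficiently large. -/

import Mathlib

/-!
Put `t = x^{1/3}` and `n = ⌊t⌋`. Then `x^n/(n!)³ = (tⁿ/n!)³` and `x^{-1/2} e^{3t} = (eᵗ/√t)³`,
so it suffices to show `tⁿ/n! ≍ eᵗ/√t`. Writing `n! = sₙ √(2n) (n/e)ⁿ` with the Stirling sequence
`√π ≤ sₙ ≤ s₁ = e/√2`, we get `tⁿ/n! = (t/n)ⁿ eⁿ / (sₙ √(2n))`; together with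
`1 ≤ (t/n)ⁿ ≤ e^{t-n}` and `n ≤ t < 2n` this gives `e^{t-2}/√t ≤ tⁿ/n! ≤ eᵗ/√(πt)`.
-/

open Real Nat

namespace Stirling

lemma stirlingSeq_le_exp_one_div_sqrt_two {n : ℕ} (hn : n ≠ 0) : stirlingSeq n ≤ exp 1 / √2 := by
  obtain ⟨m, rfl⟩ := exists_eq_succ_of_ne_zero hn
  exact stirlingSeq_one ▸ stirlingSeq'_antitone (Nat.zero_le m)

lemma stirlingSeq_pos {n : ℕ} (hn : n ≠ 0) : 0 < stirlingSeq n := by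
  obtain ⟨m, rfl⟩ := exists_eq_succ_of_ne_zero hn
  exact stirlingSeq'_pos m

lemma pow_div_factorial_eq (t : ℝ) {n : ℕ} (hn : n ≠ 0) :
    t ^ n / n ! = (t / n) ^ n * exp n / (√(2 * n) * stirlingSeq n) := by
  have : (0 : ℝ) < n := by positivity
  rw [stirlingSeq, ← exp_one_pow]
  field_simp
  rw [mul_assoc, ← mul_pow, ← mul_pow]
  congr 1
  field_simp

end Stirling

lemma div_pow_le_exp_sub {t : ℝ} (ht : 0 ≤ t) {n : ℕ} (hn : n ≠ 0) :
    (t / n) ^ n ≤ exp (t - n) := by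
  calc (t / n) ^ n ≤ exp (t / n - 1) ^ n := by
        gcongr
        linarith [add_one_le_exp (t / n - 1)]
    _ = exp (t - n) := by
        rw [← exp_nat_mul]
        congr 1
        field_simp

lemma pow_floor_div_factorial_le {t : ℝ} (ht : 1 ≤ t) :
    t ^ ⌊t⌋₊ / (⌊t⌋₊ ! : ℝ) ≤ exp t / √t / √π := by
  set n := ⌊t⌋₊
  have hn : n ≠ 0 := (Nat.floor_pos.2 ht).ne'
  have hnum : (t / n) ^ n * exp n ≤ exp t := by
    calc (t / n) ^ n * exp n ≤ exp (t - n) * exp n := by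
          gcongr; exact div_pow_le_exp_sub (by linarith) hn
      _ = exp t := by rw [← exp_add, sub_add_cancel]
  have hden : √t * √π ≤ √(2 * n) * Stirling.stirlingSeq n := by
    have : t ≤ 2 * n := by
      have := Nat.lt_floor_add_one t
      have : (1 : ℝ) ≤ n := by exact_mod_cast Nat.one_le_iff_ne_zero.2 hn
      linarith
    gcongr
    exact Stirling.sqrt_pi_le_stirlingSeq hn
  rw [Stirling.pow_div_factorial_eq t hn, div_div]
  gcongr

lemma exp_div_sqrt_div_exp_two_le_pow_floor_div_factorial {t : ℝ} (ht : 1 ≤ t) :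
    exp t / √t / exp 2 ≤ t ^ ⌊t⌋₊ / (⌊t⌋₊ ! : ℝ) := by
  set n := ⌊t⌋₊
  have hn : n ≠ 0 := (Nat.floor_pos.2 ht).ne'
  have hnum : exp (t - 1) ≤ (t / n) ^ n * exp n := by
    have : 1 ≤ t / n := (one_le_div (by positivity)).2 (Nat.floor_le (by linarith))
    calc exp (t - 1) ≤ 1 * exp n := by
          rw [one_mul, exp_le_exp]; linarith [Nat.lt_floor_add_one t]
      _ ≤ (t / n) ^ n * exp n := by gcongr; exact one_le_pow₀ this
  have hden : √(2 * n) * Stirling.stirlingSeq n ≤ √(2 * t) * (exp 1 / √2) := by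
    have hnt : (n : ℝ) ≤ t := Nat.floor_le (by linarith)
    have := Stirling.stirlingSeq_pos hn
    gcongr
    exact Stirling.stirlingSeq_le_exp_one_div_sqrt_two hn
  rw [Stirling.pow_div_factorial_eq t hn]
  calc exp t / √t / exp 2 = exp (t - 1) / (√(2 * t) * (exp 1 / √2)) := by
        rw [sqrt_mul zero_le_two, exp_sub, show (2 : ℝ) = 1 + 1 by norm_num, exp_add]
        field_simp
    _ ≤ _ := by
        have := Stirling.stirlingSeq_pos hn
        gcongr

lemma pow_rpow_neg_half_mul_exp_eq {t : ℝ} (ht : 0 ≤ t) :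
    (t ^ 3) ^ (-(1:ℝ)/2) * exp (3 * t) = (exp t / √t) ^ 3 := by
  rw [← rpow_natCast, ← rpow_mul ht, sqrt_eq_rpow, div_pow, ← rpow_natCast (t ^ _),
    ← rpow_mul ht, ← exp_nat_mul, show ((3 : ℕ) : ℝ) * (-1 / 2) = -(1 / 2 * 3) by norm_num,
    rpow_neg ht]
  push_cast
  ring

/-- Stirling-type two-sided estimate: for `x > 1` sufficiently large and `N = ⌊x^{1/3}⌋`,
`c x^{-1/2} e^{3x^{1/3}} ≤ x^N/(N!)³ ≤ C x^{-1/2} e^{3x^{1/3}}` for universal `c, C > 0`. -/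
theorem stirling_echo_bound :
    ∃ C c : ℝ, 0 < C ∧ 0 < c ∧ ∃ M : ℝ, ∀ x : ℝ, 1 < x → M ≤ x →
      (c * (x ^ (-(1:ℝ)/2) * Real.exp (3 * x ^ ((1:ℝ)/3)))
          ≤ x ^ (Nat.floor (x ^ ((1:ℝ)/3))) /
              ((Nat.factorial (Nat.floor (x ^ ((1:ℝ)/3))) : ℝ)) ^ 3)
      ∧ (x ^ (Nat.floor (x ^ ((1:ℝ)/3))) /
            ((Nat.factorial (Nat.floor (x ^ ((1:ℝ)/3))) : ℝ)) ^ 3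
          ≤ C * (x ^ (-(1:ℝ)/2) * Real.exp (3 * x ^ ((1:ℝ)/3)))) := by
  refine ⟨1 / √π ^ 3, 1 / exp 2 ^ 3, by positivity, by positivity, 1, fun x hx _ => ?_⟩
  set t := x ^ ((1:ℝ)/3)
  have ht : 1 ≤ t := one_le_rpow hx.le (by norm_num)
  have hxt : x = t ^ 3 := by
    rw [← rpow_natCast, ← rpow_mul (by linarith)]; norm_num
  rw [hxt, pow_right_comm, ← div_pow, pow_rpow_neg_half_mul_exp_eq (by linarith)]
  constructor
  · calc 1 / exp 2 ^ 3 * (exp t / √t) ^ 3 = (exp t / √t / exp 2) ^ 3 := by ring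
      _ ≤ _ := pow_le_pow_left₀ (by positivity)
          (exp_div_sqrt_div_exp_two_le_pow_floor_div_factorial ht) 3
  · calc (t ^ ⌊t⌋₊ / (⌊t⌋₊ ! : ℝ)) ^ 3 ≤ (exp t / √t / √π) ^ 3 :=
          pow_le_pow_left₀ (by positivity) (pow_floor_div_factorial_le ht) 3
      _ = _ := by ring
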